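/- arXiv:math/0612745 — 2 statements merged into one kernel-verified Lean document; each statement's English description precedes it below -/
import Mathlib

section
/- Let A be a commutative ring, m, n ∈ ℕ, and let a : [0,∞)^m × ℕ^n → A be a coefficient function with natural support, i.e. for each i ≤ m and each R > 0 the set {αᵢ : (α,β) ∈ supp a} ∩ [0,R] is finite. Fix γ ∈ [0,∞)^m. For I ⊆ {1,…,m} set B_{γ,I} := {(αᵢ)_{i∈I} : (α,β) ∈ supp a and αᵢ < γᵢ for all i ∈ I} (and B_{γ,∅} := the singleton of the empty tuple). Then (a) each B_{γ,I} is finite, and (b) there is a unique family of coefficient functions F_{γ,I,μ} : [0,∞)^{Ī} × ℕ^n → A (for I ⊆ {1,…,m} and μ ∈ B_{γ,I}, where Ī := {1,…,m} \ I), each with natural support, such that for every (β,δ) ∈ [0,∞)^m × ℕ^n one has a(β,δ) = Σ_{I ⊆ {1,…,m}} Σ_{μ ∈ B_{γ,I}} [indicator of: βᵢ = μᵢ for all i ∈ I, and βᵢ ≥ γᵢ for all i ∈ Ī] · F_{γ,I,μ}((βᵢ − γᵢ)_{i∈Ī}, δ). (This is the coefficientwise form of the γ-representation F = Σ_I X_{Ī}^{γ_Ī}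 Σ_{μ ∈ B_{γ,I}} X_I^{μ} F_{γ,I,μ}(X_Ī, Y) of a generalized power series F.) -/
noncomputable section
open scoped Classical

/-- Coefficient function of a generalized power series in `m` real-exponent variables and
`n` natural-exponent variables, with natural (and nonnegative) support. -/
def NatSupp {A : Type*} [CommRing A] {m n : ℕ}
    (a : (Fin m → ℝ) → (Fin n → ℕ) → A) : Prop :=
  (∀ α β, a α β ≠ 0 → ∀ i, 0 ≤ α i) ∧
  ∀ i : Fin m, ∀ R : ℝ, 0 < R →
    {r : ℝ | (∃ α β, a α β ≠ 0 ∧ α i = r) ∧ r ≤ R}.Finite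

/-- The set `B_{γ,I}` of `I`-tuples of exponents (encoded as functions vanishing off `I`)
appearing in the support of `a` and `< γ` on `I`; `B_{γ,∅}` is the singleton of the empty
tuple. -/
def BSet {A : Type*} [CommRing A] {m n : ℕ}
    (a : (Fin m → ℝ) → (Fin n → ℕ) → A) (γ : Fin m → ℝ) (I : Finset (Fin m)) :
    Set (Fin m → ℝ) :=
  if I = ∅ then {0} else
    {μ | (∀ i, i ∉ I → μ i = 0) ∧
      ∃ α β, a α β ≠ 0 ∧ ∀ i ∈ I, α i = μ i ∧ α i < γ i}

/-- `F` is a family of coefficient functions realizing the `γ`-representation of `a`: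
each `F I μ` (for `μ ∈ B_{γ,I}`) has natural support and depends only on the coordinates
outside `I`, and coefficientwise
`a(β,δ) = Σ_I Σ_{μ ∈ B_{γ,I}} [β_I = μ_I ∧ β_Ī ≥ γ_Ī] · F I μ ((β−γ)_Ī, δ)`. -/
def GammaRepr {A : Type*} [CommRing A] {m n : ℕ}
    (a : (Fin m → ℝ) → (Fin n → ℕ) → A) (γ : Fin m → ℝ)
    (F : Finset (Fin m) → (Fin m → ℝ) → (Fin m → ℝ) → (Fin n → ℕ) → A) : Prop :=
  (∀ I : Finset (Fin m), ∀ μ ∈ BSet a γ I,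
      NatSupp (F I μ) ∧ ∀ α β, F I μ α β ≠ 0 → ∀ i ∈ I, α i = 0) ∧
  ∀ β δ, a β δ = ∑ I : Finset (Fin m), ∑ᶠ μ ∈ BSet a γ I,
    (if (∀ i ∈ I, β i = μ i) ∧ (∀ i, i ∉ I → γ i ≤ β i)
      then F I μ (fun i => if i ∈ I then 0 else β i - γ i) δ else 0)

section Aux

variable {A : Type*} [CommRing A] {m n : ℕ}
  (a : (Fin m → ℝ) → (Fin n → ℕ) → A) (γ : Fin m → ℝ)

/-- Basic facts about elements of `BSet`. -/
lemma bset_spec (ha : NatSupp a) {I : Finset (Fin m)} {μ : Fin m → ℝ}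
    (hμ : μ ∈ BSet a γ I) :
    (∀ i, i ∉ I → μ i = 0) ∧ (∀ i ∈ I, μ i < γ i) ∧ (∀ i, 0 ≤ μ i) := by
  by_cases hI : I = ∅
  · subst hI
    simp only [BSet, if_pos rfl, Set.mem_singleton_iff] at hμ
    subst hμ
    refine ⟨fun i _ => rfl, fun i hi => absurd hi (by simp), fun i => le_refl 0⟩
  · simp only [BSet, if_neg hI, Set.mem_setOf_eq] at hμ
    obtain ⟨h0, α, β, hαβ, hα⟩ := hμ
    refine ⟨h0, fun i hi => (hα i hi).1 ▸ (hα i hi).2, fun i => ?_⟩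
    by_cases hi : i ∈ I
    · exact (hα i hi).1 ▸ ha.1 α β hαβ i
    · exact (h0 i hi).ge

lemma bset_finite (ha : NatSupp a) (I : Finset (Fin m)) : (BSet a γ I).Finite := by
  by_cases hI : I = ∅
  · subst hI; simp [BSet]
  · have key : ∀ i : Fin m,
        ({r : ℝ | (∃ α β, a α β ≠ 0 ∧ α i = r) ∧ r ≤ max (γ i) 1} ∪ {0}).Finite := by
      intro i
      exact (ha.2 i (max (γ i) 1) (lt_of_lt_of_le one_pos (le_max_right _ _))).union
        (Set.finite_singleton 0)
    refine Set.Finite.subset (Set.Finite.pi (fun i => key i)) ?_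
    intro μ hμ
    simp only [BSet, if_neg hI, Set.mem_setOf_eq] at hμ
    obtain ⟨h0, α, β, hαβ, hα⟩ := hμ
    intro i _
    by_cases hi : i ∈ I
    · left
      exact ⟨⟨α, β, hαβ, (hα i hi).1⟩,
        le_trans (le_of_lt ((hα i hi).1 ▸ (hα i hi).2)) (le_max_left _ _)⟩
    · right; exact h0 i hi

/-- The key collapsing lemma: the double sum appearing in `GammaRepr` has at most
one nonzero term, located at `I₀ = {i : β i < γ i}` and `μ₀ = β` restricted to `I₀`. -/
lemma collapse (ha : NatSupp a)
    (G : Finset (Fin m) → (Fin m → ℝ) → (Fin m → ℝ) → (Fin n → ℕ) → A)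
    (β : Fin m → ℝ) (δ : Fin n → ℕ) :
    (∑ I : Finset (Fin m), ∑ᶠ μ ∈ BSet a γ I,
      (if (∀ i ∈ I, β i = μ i) ∧ (∀ i, i ∉ I → γ i ≤ β i)
        then G I μ (fun i => if i ∈ I then 0 else β i - γ i) δ else 0)) =
    (if (fun i => if i ∈ Finset.univ.filter (fun j => β j < γ j) then β i else 0) ∈
        BSet a γ (Finset.univ.filter (fun j => β j < γ j))
      then G (Finset.univ.filter (fun j => β j < γ j))
        (fun i => if i ∈ Finset.univ.filter (fun j => β j < γ j) then β i else 0)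
        (fun i => if i ∈ Finset.univ.filter (fun j => β j < γ j) then 0 else β i - γ i) δ
      else 0) := by
  set I₀ := Finset.univ.filter (fun j => β j < γ j) with hI₀
  set μ₀ : Fin m → ℝ := fun i => if i ∈ I₀ then β i else 0 with hμ₀
  have hmemI₀ : ∀ i, i ∈ I₀ ↔ β i < γ i := by intro i; simp [hI₀]
  have hind : ∀ (I : Finset (Fin m)) (μ : Fin m → ℝ), μ ∈ BSet a γ I →
      ((∀ i ∈ I, β i = μ i) ∧ (∀ i, i ∉ I → γ i ≤ β i)) → I = I₀ ∧ μ = μ₀ := by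
    intro I μ hμ ⟨h1, h2⟩
    obtain ⟨hz, hlt, _⟩ := bset_spec a γ ha hμ
    have hII : I = I₀ := by
      ext i
      rw [hmemI₀]
      constructor
      · intro hi; exact (h1 i hi) ▸ hlt i hi
      · intro hb
        by_contra hi
        exact absurd (h2 i hi) (not_le.mpr hb)
    refine ⟨hII, funext fun i => ?_⟩
    by_cases hi : i ∈ I₀
    · rw [hμ₀]; simp only [if_pos hi]; exact (h1 i (hII ▸ hi)).symm
    · rw [hμ₀]; simp only [if_neg hi]; exact hz i (hII ▸ hi)
  rw [Fintype.sum_eq_single I₀ ?_]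
  · -- the I₀ term
    by_cases hm : μ₀ ∈ BSet a γ I₀
    · rw [if_pos hm]
      have hfin := bset_finite a γ ha I₀
      rw [← hfin.coe_toFinset, finsum_mem_coe_finset]
      rw [Finset.sum_eq_single_of_mem μ₀ (hfin.mem_toFinset.mpr hm)]
      · rw [if_pos]
        constructor
        · intro i hi; rw [hμ₀]; simp [if_pos hi]
        · intro i hi; exact not_lt.mp (fun hb => hi ((hmemI₀ i).mpr hb))
      · intro μ hμ hne
        rw [if_neg]
        intro hcond
        exact hne ((hind I₀ μ (hfin.mem_toFinset.mp hμ) hcond).2)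
    · rw [if_neg hm]
      apply finsum_mem_of_eqOn_zero
      intro μ hμ
      simp only [Pi.zero_apply]
      rw [if_neg]
      intro hcond
      exact hm ((hind I₀ μ hμ hcond).2 ▸ hμ)
  · -- other terms vanish
    intro I hI
    apply finsum_mem_of_eqOn_zero
    intro μ hμ
    simp only [Pi.zero_apply]
    rw [if_neg]
    intro hcond
    exact hI (hind I μ hμ hcond).1

end Aux

/-- Existence and uniqueness of the `γ`-representation of a generalized
power series with natural support, in coefficientwise form; moreover each `B_{γ,I}` is
finite. -/
theorem stmt1 {A : Type*} [CommRing A] (m n : ℕ)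
    (a : (Fin m → ℝ) → (Fin n → ℕ) → A) (ha : NatSupp a)
    (γ : Fin m → ℝ) (hγ : ∀ i, 0 ≤ γ i) :
    (∀ I : Finset (Fin m), (BSet a γ I).Finite) ∧
    (∃ F, GammaRepr a γ F ∧
      ∀ F', GammaRepr a γ F' →
        ∀ I : Finset (Fin m), ∀ μ ∈ BSet a γ I, F' I μ = F I μ) := by
  refine ⟨bset_finite a γ ha, ?_⟩
  -- the canonical family
  set F : Finset (Fin m) → (Fin m → ℝ) → (Fin m → ℝ) → (Fin n → ℕ) → A :=
    fun I μ α δ =>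
      if (∀ i ∈ I, α i = 0) ∧ (∀ i, 0 ≤ α i)
        then a (fun i => if i ∈ I then μ i else α i + γ i) δ else 0 with hF
  have hFrepr : GammaRepr a γ F := by
    constructor
    · intro I μ hμ
      refine ⟨⟨?_, ?_⟩, ?_⟩
      · -- nonneg support
        intro α δ h i
        simp only [hF] at h
        by_cases hc : (∀ i ∈ I, α i = 0) ∧ (∀ i, 0 ≤ α i)
        · exact hc.2 i
        · exact absurd (if_neg hc) h
      · -- naturality
        intro i R hR
        by_cases hi : i ∈ I
        · apply Set.Finite.subset (Set.finite_singleton 0)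
          rintro r ⟨⟨α, δ, h, rfl⟩, _⟩
          simp only [hF] at h
          by_cases hc : (∀ i ∈ I, α i = 0) ∧ (∀ i, 0 ≤ α i)
          · exact hc.1 i hi
          · exact absurd (if_neg hc) h
        · have hpos : 0 < R + γ i := lt_of_lt_of_le hR (le_add_of_nonneg_right (hγ i))
          apply Set.Finite.subset ((ha.2 i (R + γ i) hpos).image (· - γ i))
          rintro r ⟨⟨α, δ, h, rfl⟩, hle⟩
          simp only [hF] at h
          by_cases hc : (∀ i ∈ I, α i = 0) ∧ (∀ i, 0 ≤ α i)
          · rw [if_pos hc] at h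
            exact ⟨α i + γ i, ⟨⟨_, δ, h, by simp [if_neg hi]⟩,
              by linarith⟩, by ring⟩
          · exact absurd (if_neg hc) h
      · -- vanishing on I
        intro α δ h i hi
        simp only [hF] at h
        by_cases hc : (∀ i ∈ I, α i = 0) ∧ (∀ i, 0 ≤ α i)
        · exact hc.1 i hi
        · exact absurd (if_neg hc) h
    · intro β δ
      rw [collapse a γ ha F β δ]
      set I₀ := Finset.univ.filter (fun j => β j < γ j) with hI₀
      set μ₀ : Fin m → ℝ := fun i => if i ∈ I₀ then β i else 0 with hμ₀
      have hmemI₀ : ∀ i, i ∈ I₀ ↔ β i < γ i := by intro i; simp [hI₀]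
      by_cases hm : μ₀ ∈ BSet a γ I₀
      · rw [if_pos hm]
        simp only [hF]
        have hcond : (∀ i ∈ I₀, (if i ∈ I₀ then (0:ℝ) else β i - γ i) = 0) ∧
            (∀ i, 0 ≤ (if i ∈ I₀ then (0:ℝ) else β i - γ i)) := by
          constructor
          · intro i hi; simp [if_pos hi]
          · intro i
            by_cases hi : i ∈ I₀
            · simp [hi]
            · simp only [if_neg hi, sub_nonneg]
              exact not_lt.mp (fun hb => hi ((hmemI₀ i).mpr hb))
        rw [if_pos hcond]
        congr 1
        funext i
        by_cases hi : i ∈ I₀ <;> simp [hμ₀, hi]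
      · rw [if_neg hm]
        by_contra h
        apply hm
        have haβ : a β δ ≠ 0 := fun hz => h (hz ▸ rfl)
        by_cases hI : I₀ = ∅
        · rw [BSet, if_pos hI]
          have : μ₀ = 0 := by
            funext i
            rw [hμ₀]
            simp [hI ▸ (Finset.notMem_empty i : i ∉ (∅ : Finset (Fin m)))]
          rw [this]; rfl
        · rw [BSet, if_neg hI]
          refine ⟨fun i hi => by rw [hμ₀]; simp [if_neg hi], β, δ, haβ, fun i hi => ?_⟩
          have hb := (hmemI₀ i).mp hi
          exact ⟨by rw [hμ₀]; simp [if_pos hi], hb⟩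
  refine ⟨F, hFrepr, ?_⟩
  -- uniqueness
  intro F' hF' I μ hμ
  obtain ⟨hz, hlt, hnn⟩ := bset_spec a γ ha hμ
  funext α δ
  by_cases hc : (∀ i ∈ I, α i = 0) ∧ (∀ i, 0 ≤ α i)
  · -- compute both via the representation identity at the composite point
    set β : Fin m → ℝ := fun i => if i ∈ I then μ i else α i + γ i with hβ
    have hII : Finset.univ.filter (fun j => β j < γ j) = I := by
      ext i
      simp only [Finset.mem_filter, Finset.mem_univ, true_and]
      constructor
      · intro hb
        by_contra hi
        rw [hβ] at hb
        simp only [if_neg hi] at hb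
        linarith [hc.2 i]
      · intro hi
        rw [hβ]; simp only [if_pos hi]; exact hlt i hi
    have hμμ : (fun i => if i ∈ I then β i else 0) = μ := by
      funext i
      by_cases hi : i ∈ I
      · rw [if_pos hi, hβ]; simp [if_pos hi]
      · rw [if_neg hi]; exact (hz i hi).symm
    have hαα : (fun i => if i ∈ I then 0 else β i - γ i) = α := by
      funext i
      by_cases hi : i ∈ I
      · rw [if_pos hi]; exact (hc.1 i hi).symm
      · rw [if_neg hi, hβ]; simp [if_neg hi]
    have key : ∀ G, GammaRepr a γ G → a β δ = G I μ α δ := by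
      intro G hG
      have hid := hG.2 β δ
      rw [collapse a γ ha G β δ, hII] at hid
      rw [hid, if_pos (by rw [hμμ]; exact hμ), hμμ, hαα]
    rw [← key F' hF', key F hFrepr]
  · -- outside the admissible region both vanish
    have hF'0 : F' I μ α δ = 0 := by
      by_contra h
      apply hc
      obtain ⟨hns, hvan⟩ := hF'.1 I μ hμ
      exact ⟨hvan α δ h, hns.1 α δ h⟩
    have hF0 : F I μ α δ = 0 := by simp only [hF]; rw [if_neg hc]
    rw [hF'0, hF0]
end
end

section
/- Let m ≥ 1 and c, C > 0, and let f be holomorphic on Ω(c,C)^m. Suppose f has asymptotic expansion 0, i.e. for every ν > 0 there exist c', C' > 0 with Ω(c',C') ⊆ Ω(c,C) such that f(z) = o(‖E(z)‖^ν) as ‖E(z)‖ → 0 with z ∈ Ω(c',C')^m. Then f vanishes identically on Ω(c,C)^m. Consequently, a holomorphic function on Ω(c,C)^m has at most one asymptotic expansion with natural support: if f has asymptotic expansions a and a′ then a = a′, and if two holomorphic functions on Ω(c,C)^m have the same asymptotic expansion then they are equal. -/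
noncomputable section
open scoped Classical

/-- Logarithmic model of a standard quadratic domain:
`Ω(c,C) = {z : Re z < log c - C·√|Im z|}`. -/
def SQD (c C : ℝ) : Set ℂ := {z : ℂ | z.re < Real.log c - C * Real.sqrt |z.im|}

/-- The cartesian power `Ω(c,C)^m`. -/
def QDom (c C : ℝ) (m : ℕ) : Set (Fin m → ℂ) := {z | ∀ i, z i ∈ SQD c C}

/-- Open disc `D_R` of radius `R` centred at `0`. -/
def Disc (R : ℝ) : Set ℂ := {w : ℂ | ‖w‖ < R}

/-- Polydisc `D_R^n`. -/
def PDisc (R : ℝ) (n : ℕ) : Set (Fin n → ℂ) := {y | ∀ j, y j ∈ Disc R}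

/-- The exponential monomial `exp⟨α,z⟩`. -/
def expMono {m : ℕ} (α : Fin m → ℝ) (z : Fin m → ℂ) : ℂ :=
  Complex.exp (∑ i, (α i : ℂ) * z i)

/-- Euclidean norm of `E(z) = (exp (Re z₁), …, exp (Re z_m))`. -/
def eNorm {m : ℕ} (z : Fin m → ℂ) : ℝ :=
  Real.sqrt (∑ i, Real.exp ((z i).re) ^ 2)

/-- A generalized power series with natural support: nonnegative exponents, and in each
coordinate the set of exponents below any bound is finite. -/
def NaturalSeries {m : ℕ} (a : (Fin m → ℝ) → ℂ) : Prop :=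
  (∀ α, a α ≠ 0 → ∀ i, 0 ≤ α i) ∧
  ∀ i : Fin m, ∀ R : ℝ, 0 < R → {r : ℝ | (∃ α, a α ≠ 0 ∧ α i = r) ∧ r ≤ R}.Finite

/-- `f` has asymptotic expansion `a` on `Ω(c,C)^m`: for every `ν > 0` there is a smaller
standard quadratic domain on which `f` minus the partial sum of weight `≤ ν` is
`o(‖E(z)‖^ν)` as `‖E(z)‖ → 0`. -/
def HasAsymExp {m : ℕ} (c C : ℝ) (f : (Fin m → ℂ) → ℂ) (a : (Fin m → ℝ) → ℂ) : Prop :=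
  NaturalSeries a ∧
  ∀ ν : ℝ, 0 < ν → ∃ c' C' : ℝ, 0 < c' ∧ 0 < C' ∧ SQD c' C' ⊆ SQD c C ∧
    ∃ F : Finset (Fin m → ℝ),
      (∀ α, α ∈ F ↔ a α ≠ 0 ∧ ∑ i, α i ≤ ν) ∧
      ∀ ε : ℝ, 0 < ε → ∃ δ : ℝ, 0 < δ ∧
        ∀ z ∈ QDom c' C' m, eNorm z < δ →
          ‖f z - ∑ α ∈ F, a α * expMono α z‖ ≤ ε * eNorm z ^ ν

/-!
Vanishing: the map `w ↦ A - w - 2C√(w+1)` sends the closed right half-plane into `Ω(c',C')`,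
with real part at most `const - Re w`, and this survives a perturbation by any `b` with
`‖b‖ ≤ 1`. Composed with it (diagonally, plus `b`), `f` becomes a bounded holomorphic function
on the half-plane which, by the expansion `0`, decays faster than every `exp (-ν x)` along the
real axis, so it vanishes by Phragmén–Lindelöf. Hence `f` vanishes near a point of
`Ω(c,C)^m`, and the one-variable identity theorem, applied one coordinate at a time on the
connected set `Ω(c,C)`, gives `f = 0`.

Uniqueness: if `a ≠ a'`, the difference of two truncations is a finite sum
`∑ b_α exp⟨α,z⟩ = O(‖E(z)‖^ν)` with `b_{α₀} ≠ 0` and `|α₀| < ν`. On a real ray `z = θ t`,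
`t → -∞`, with `θ` close to `(1,…,1)` and generic enough that the exponents `⟨α,θ⟩` are
distinct, the term with the smallest exponent dominates, and that exponent is `< ν`.
Applying the vanishing part to `g₁ - g₂` gives the last claim.
-/

open Filter Topology Asymptotics Set

theorem isPreconnected_setOf_re_lt {φ : ℝ → ℝ} (hφ : Continuous φ) :
    IsPreconnected {z : ℂ | z.re < φ z.im} := by
  have h : {z : ℂ | z.re < φ z.im} = (fun z : ℂ => z + φ z.im) '' {z | z.re < 0} := by
    ext w
    refine ⟨fun hw => ⟨w - φ w.im, by simpa using hw, by simp⟩, ?_⟩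
    rintro ⟨z, hz, rfl⟩
    simpa using hz
  rw [h]
  exact (convex_halfSpace_re_lt 0).isPreconnected.image _ (by fun_prop)

theorem isOpen_SQD (c C : ℝ) : IsOpen (SQD c C) :=
  isOpen_lt Complex.continuous_re (by fun_prop)

theorem isPreconnected_SQD (c C : ℝ) : IsPreconnected (SQD c C) :=
  isPreconnected_setOf_re_lt (φ := fun y => Real.log c - C * √|y|) (by fun_prop)

theorem QDom_eq_pi (c C : ℝ) (m : ℕ) : QDom c C m = univ.pi fun _ => SQD c C := by
  ext z; simp [QDom]

theorem isOpen_QDom (c C : ℝ) (m : ℕ) : IsOpen (QDom c C m) := by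
  rw [QDom_eq_pi]
  exact isOpen_set_pi finite_univ fun _ _ => isOpen_SQD c C

theorem SQD_subset_SQD {c₁ C₁ c₂ C₂ : ℝ} (hc₁ : 0 < c₁) (hc : c₁ ≤ c₂) (hC : C₂ ≤ C₁) :
    SQD c₁ C₁ ⊆ SQD c₂ C₂ := fun z hz => by
  have := Real.log_le_log hc₁ hc
  have := mul_le_mul_of_nonneg_right hC (Real.sqrt_nonneg |z.im|)
  simp only [SQD, mem_ofPred_eq] at hz ⊢
  linarith

theorem SQD_min_max_subset {c₁ C₁ c₂ C₂ : ℝ} (hc₁ : 0 < c₁) (hc₂ : 0 < c₂) :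
    SQD (min c₁ c₂) (max C₁ C₂) ⊆ SQD c₁ C₁ ∩ SQD c₂ C₂ := fun _ hz =>
  ⟨SQD_subset_SQD (lt_min hc₁ hc₂) (min_le_left _ _) (le_max_left _ _) hz,
    SQD_subset_SQD (lt_min hc₁ hc₂) (min_le_right _ _) (le_max_right _ _) hz⟩

theorem eqOn_zero_pi_of_eventuallyEq_zero {ι E : Type*} [Fintype ι] [DecidableEq ι]
    [NormedAddCommGroup E] [NormedSpace ℂ E] [CompleteSpace E] {U : ι → Set ℂ}
    (hUo : ∀ i, IsOpen (U i)) (hUc : ∀ i, IsPreconnected (U i)) {f : (ι → ℂ) → E}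
    (hf : DifferentiableOn ℂ f (univ.pi U))
    {p : ι → ℂ} (hp : p ∈ univ.pi U) (h0 : f =ᶠ[𝓝 p] 0) : EqOn f 0 (univ.pi U) := by
  obtain ⟨ε, hε, hball⟩ := Metric.eventually_nhds_iff.1 h0
  suffices ∀ s : Finset ι, ∀ z ∈ univ.pi U, (∀ i ∉ s, dist (z i) (p i) < ε) → f z = 0 from
    fun z hz => this Finset.univ z hz (by simp)
  intro s
  induction s using Finset.induction_on with
  | empty => exact fun z _ hz => hball ((dist_pi_lt_iff hε).2 fun i => hz i (by simp))
  | insert j s _ ih =>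
    intro z hz hzs
    have hupd : ∀ ζ ∈ U j, Function.update z j ζ ∈ univ.pi U := fun ζ hζ i _ => by
      rcases eq_or_ne i j with rfl | hij
      · simpa using hζ
      · simpa [hij] using hz i trivial
    have hdiff : DifferentiableOn ℂ (fun ζ => f (Function.update z j ζ)) (U j) :=
      hf.comp (fun ζ _ => (hasFDerivAt_update z ζ).differentiableAt.differentiableWithinAt) hupd
    have hnear : (fun ζ => f (Function.update z j ζ)) =ᶠ[𝓝 (p j)] 0 := by
      filter_upwards [Metric.ball_mem_nhds (p j) hε, (hUo j).mem_nhds (hp j trivial)] with ζ hζ hζU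
      refine ih _ (hupd ζ hζU) fun i hi => ?_
      rcases eq_or_ne i j with rfl | hij
      · simpa using hζ
      · simpa [hij] using hzs i (by simp [hij, hi])
    simpa using (hdiff.analyticOnNhd (hUo j)).eqOn_zero_of_preconnected_of_eventuallyEq_zero
      (hUc j) (hp j trivial) hnear (hz j trivial)

theorem eNorm_nonneg {m : ℕ} (z : Fin m → ℂ) : 0 ≤ eNorm z := Real.sqrt_nonneg _

theorem eNorm_le_sqrt_mul_exp {m : ℕ} {z : Fin m → ℂ} {r : ℝ} (h : ∀ i, (z i).re ≤ r) :
    eNorm z ≤ √m * Real.exp r := by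
  have hsum : ∑ i, Real.exp (z i).re ^ 2 ≤ m * Real.exp r ^ 2 := by
    simpa using Finset.sum_le_sum fun i (_ : i ∈ Finset.univ) =>
      pow_le_pow_left₀ (Real.exp_nonneg _) (Real.exp_le_exp.2 (h i)) 2
  calc eNorm z ≤ √(m * Real.exp r ^ 2) := Real.sqrt_le_sqrt hsum
    _ = √m * Real.exp r := by
      rw [Real.sqrt_mul (Nat.cast_nonneg m), Real.sqrt_sq (Real.exp_nonneg r)]

def atENormZero (c C : ℝ) (m : ℕ) : Filter (Fin m → ℂ) :=
  comap eNorm (𝓝 0) ⊓ 𝓟 (QDom c C m)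

theorem atENormZero_mono {c₁ C₁ c₂ C₂ : ℝ} {m : ℕ} (h : SQD c₁ C₁ ⊆ SQD c₂ C₂) :
    atENormZero c₁ C₁ m ≤ atENormZero c₂ C₂ m :=
  inf_le_inf_left _ (principal_mono.2 fun _ hz i => h (hz i))

theorem isLittleO_atENormZero_iff {c C ν : ℝ} {m : ℕ} {F : (Fin m → ℂ) → ℂ} :
    F =o[atENormZero c C m] (fun z => eNorm z ^ ν) ↔
      ∀ ε : ℝ, 0 < ε → ∃ δ : ℝ, 0 < δ ∧
        ∀ z ∈ QDom c C m, eNorm z < δ → ‖F z‖ ≤ ε * eNorm z ^ ν := by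
  have hnorm (z : Fin m → ℂ) : ‖eNorm z ^ ν‖ = eNorm z ^ ν :=
    Real.norm_of_nonneg (Real.rpow_nonneg (Real.sqrt_nonneg _) ν)
  have habs (z : Fin m → ℂ) : |eNorm z| = eNorm z := abs_of_nonneg (Real.sqrt_nonneg _)
  simp only [isLittleO_iff, atENormZero, eventually_inf_principal,
    (Metric.nhds_basis_ball.comap eNorm).eventually_iff, mem_preimage, Metric.mem_ball,
    Real.dist_eq, sub_zero, hnorm, habs]
  exact forall₂_congr fun ε _ => exists_congr fun δ => and_congr_right fun _ =>
    ⟨fun h z hz hδ => h hδ hz, fun h z hδ hz => h z hz hδ⟩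

theorem tendsto_atENormZero {α : Type*} {l : Filter α} {c C M : ℝ} (hC : 0 ≤ C) {m : ℕ}
    {Z : α → Fin m → ℂ} (hre : ∀ i, Tendsto (fun t => (Z t i).re) l atBot)
    (him : ∀ᶠ t in l, ∀ i, |(Z t i).im| ≤ M) : Tendsto Z l (atENormZero c C m) := by
  refine tendsto_inf.2 ⟨tendsto_comap_iff.2 ?_, tendsto_principal.2 ?_⟩
  · have : Tendsto (fun t => √(∑ i, Real.exp (Z t i).re ^ 2)) l (𝓝 √(∑ _i : Fin m, 0 ^ 2)) :=
      (tendsto_finsetSum _ fun i _ => ((Real.tendsto_exp_atBot.comp (hre i)).pow 2)).sqrt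
    simpa [eNorm, Function.comp_def] using this
  · filter_upwards [him, eventually_all.2 fun i => (hre i).eventually_lt_atBot
      (Real.log c - C * √M)] with t htM htre i
    have := mul_le_mul_of_nonneg_left (Real.sqrt_le_sqrt (htM i)) hC
    simp only [SQD, mem_ofPred_eq]
    linarith [htre i]

theorem hasAsymExp_iff {m : ℕ} {c C : ℝ} {f : (Fin m → ℂ) → ℂ} {a : (Fin m → ℝ) → ℂ} :
    HasAsymExp c C f a ↔ NaturalSeries a ∧
      ∀ ν : ℝ, 0 < ν → ∃ c' C' : ℝ, 0 < c' ∧ 0 < C' ∧ SQD c' C' ⊆ SQD c C ∧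
        ∃ F : Finset (Fin m → ℝ), (∀ α, α ∈ F ↔ a α ≠ 0 ∧ ∑ i, α i ≤ ν) ∧
          (fun z => f z - ∑ α ∈ F, a α * expMono α z) =o[atENormZero c' C' m]
            fun z => eNorm z ^ ν := by
  simp only [HasAsymExp, isLittleO_atENormZero_iff]

theorem Complex.sq_sqrt (z : ℂ) : Complex.sqrt z ^ 2 = z := by
  unfold Complex.sqrt
  simpa only [Nat.cast_ofNat] using Complex.cpow_nat_inv_pow z (n := 2) two_ne_zero

theorem Complex.re_sqrt_nonneg (z : ℂ) : 0 ≤ (Complex.sqrt z).re := by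
  rw [Complex.sqrt, Complex.cpow_inv_two_re]
  exact Real.sqrt_nonneg _

theorem Complex.im_sqrt_ofReal {x : ℝ} (hx : 0 ≤ x) : (Complex.sqrt x).im = 0 := by
  rw [← abs_eq_zero, Complex.sqrt, Complex.abs_cpow_inv_two_im]
  simp [abs_of_nonneg hx]

/-- The term `-2C√(w+1)` pushes `Re` to the left by about `2C√|w|`, which absorbs the
`C√|Im|` in the definition of `Ω(c,C)`. -/
def halfPlaneMap (C A : ℝ) (w : ℂ) : ℂ := A - w - 2 * C * Complex.sqrt (w + 1)

section halfPlaneMap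

variable {C A : ℝ} {w b : ℂ}

theorem re_add_mul_sqrt_abs_im_halfPlaneMap_add_le (hC : 0 ≤ C) (hw : 0 ≤ w.re) (hb : ‖b‖ ≤ 1) :
    (halfPlaneMap C A w + b).re + C * √|(halfPlaneMap C A w + b).im| ≤ A + (C + 1) ^ 2 - w.re := by
  set s := Complex.sqrt (w + 1)
  have hs0 : 0 ≤ s.re := Complex.re_sqrt_nonneg _
  have hsq : s ^ 2 = w + 1 := Complex.sq_sqrt _
  have hre : s.re ^ 2 - s.im ^ 2 = w.re + 1 := by
    simpa [sq, Complex.mul_re] using congrArg Complex.re hsq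
  have him : 2 * s.re * s.im = w.im := by
    have := congrArg Complex.im hsq
    simp only [sq, Complex.mul_im, Complex.add_im, Complex.one_im, add_zero] at this
    linarith
  have hsim : |s.im| ≤ s.re := abs_le_of_sq_le_sq (by nlinarith) hs0
  have hwim : |w.im| ≤ 2 * s.re ^ 2 := by
    rw [← him, abs_mul, abs_of_nonneg (by positivity)]
    nlinarith
  have hbre := (Complex.abs_re_le_norm b).trans hb
  have hbim := (Complex.abs_im_le_norm b).trans hb
  have hre' : (halfPlaneMap C A w + b).re = A - w.re - 2 * C * s.re + b.re := by
    simp [halfPlaneMap, s]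
  have him' : |(halfPlaneMap C A w + b).im| ≤ 2 * s.re ^ 2 + 2 * C * s.re + 1 := by
    have : (halfPlaneMap C A w + b).im = -w.im - 2 * C * s.im + b.im := by
      simp [halfPlaneMap, s]
    rw [this]
    have := abs_add_three (-w.im) (-(2 * C * s.im)) b.im
    simp only [abs_neg, abs_mul, abs_of_nonneg hC, abs_two] at this
    rw [sub_eq_add_neg]
    nlinarith [abs_le.1 hbim]
  have hsqrt : √|(halfPlaneMap C A w + b).im| ≤ 2 * s.re + C / 2 + 1 :=
    Real.sqrt_le_iff.2 ⟨by positivity, by nlinarith⟩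
  nlinarith [mul_le_mul_of_nonneg_left hsqrt hC, abs_le.1 hbre]

theorem re_halfPlaneMap_add_le (hC : 0 ≤ C) (hw : 0 ≤ w.re) (hb : ‖b‖ ≤ 1) :
    (halfPlaneMap C A w + b).re ≤ A + (C + 1) ^ 2 - w.re := by
  nlinarith [re_add_mul_sqrt_abs_im_halfPlaneMap_add_le (A := A) hC hw hb,
    Real.sqrt_nonneg |(halfPlaneMap C A w + b).im|]

theorem halfPlaneMap_add_mem_SQD {c : ℝ} (hC : 0 ≤ C) (hA : A + (C + 1) ^ 2 < Real.log c)
    (hw : 0 ≤ w.re) (hb : ‖b‖ ≤ 1) : halfPlaneMap C A w + b ∈ SQD c C := by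
  have := re_add_mul_sqrt_abs_im_halfPlaneMap_add_le (A := A) hC hw hb
  simp only [SQD, mem_ofPred_eq]
  linarith

theorem im_halfPlaneMap_ofReal {x : ℝ} (hx : 0 ≤ x) : (halfPlaneMap C A x).im = 0 := by
  have h := Complex.im_sqrt_ofReal (by linarith : 0 ≤ x + 1)
  push_cast at h
  simp [halfPlaneMap, Complex.mul_im, h]

theorem differentiableAt_halfPlaneMap (hw : 0 ≤ w.re) :
    DifferentiableAt ℂ (halfPlaneMap C A) w := by
  have : w + 1 ∈ Complex.slitPlane := Or.inl (by simp; linarith)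
  unfold halfPlaneMap
  fun_prop (disch := exact this)

end halfPlaneMap

theorem eqOn_zero_of_bounded_of_isBigO_exp {E : Type*} [NormedAddCommGroup E] [NormedSpace ℂ E]
    {g : ℂ → E} (hd : ∀ w : ℂ, 0 ≤ w.re → DifferentiableAt ℂ g w) {M : ℝ}
    (hbdd : ∀ w : ℂ, 0 ≤ w.re → ‖g w‖ ≤ M)
    (hdecay : ∀ ν : ℝ, 0 < ν → (fun x : ℝ => g x) =O[atTop] fun x => Real.exp (-(ν * x))) :
    EqOn g 0 {w : ℂ | 0 ≤ w.re} := by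
  refine PhragmenLindelof.eq_zero_on_right_half_plane_of_superexponential_decay ?_
    ⟨0, two_pos, 0, IsBigO.of_bound M ?_⟩ (fun n => ?_) ⟨M, fun x => hbdd _ (by simp)⟩
  · refine DifferentiableOn.diffContOnCl fun w hw => (hd w ?_).differentiableWithinAt
    rwa [Complex.closure_setOfPred_lt_re] at hw
  · exact eventually_inf_principal.2 (.of_forall fun w hw => by simpa using hbdd w (le_of_lt hw))
  · have h := (isBigO_refl (fun x => Real.exp x ^ n) atTop).mul
      (hdecay (n + 1) (by positivity)).norm_left
    refine h.trans_tendsto ?_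
    have (x : ℝ) : Real.exp x ^ n * Real.exp (-((n + 1) * x)) = Real.exp (-x) := by
      rw [← Real.exp_nat_mul, ← Real.exp_add]; ring_nf
    simpa only [this] using Real.tendsto_exp_neg_atTop_nhds_zero

theorem apply_halfPlaneMap_add_eq_zero {m : ℕ} {c C A δ M : ℝ} {f : (Fin m → ℂ) → ℂ}
    (hC : 0 ≤ C) (hA : A + (C + 1) ^ 2 < Real.log c) (hAδ : √m * Real.exp (A + (C + 1) ^ 2) < δ)
    (hf : ∀ z ∈ QDom c C m, DifferentiableAt ℂ f z)
    (hbdd : ∀ z ∈ QDom c C m, eNorm z < δ → ‖f z‖ ≤ M)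
    (hflat : ∀ ν : ℝ, 0 < ν → ∃ c' C', 0 ≤ C' ∧ f =O[atENormZero c' C' m] fun z => eNorm z ^ ν)
    {b : Fin m → ℂ} (hb : ∀ i, ‖b i‖ ≤ 1) : f (fun i => halfPlaneMap C A 0 + b i) = 0 := by
  set K := √m * Real.exp (A + (C + 1) ^ 2)
  set Ψ : ℂ → Fin m → ℂ := fun w i => halfPlaneMap C A w + b i
  have hΨ {w : ℂ} (hw : 0 ≤ w.re) : Ψ w ∈ QDom c C m := fun i =>
    halfPlaneMap_add_mem_SQD hC hA hw (hb i)
  have hΨE {w : ℂ} (hw : 0 ≤ w.re) : eNorm (Ψ w) ≤ K * Real.exp (-w.re) := by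
    rw [mul_assoc, ← Real.exp_add, ← sub_eq_add_neg]
    exact eNorm_le_sqrt_mul_exp fun i => re_halfPlaneMap_add_le hC hw (hb i)
  have hΨδ {w : ℂ} (hw : 0 ≤ w.re) : eNorm (Ψ w) < δ :=
    (hΨE hw).trans_lt <| lt_of_le_of_lt (mul_le_of_le_one_right (by positivity)
      (Real.exp_le_one_iff.2 (by linarith))) hAδ
  refine eqOn_zero_of_bounded_of_isBigO_exp (g := f ∘ Ψ)
    (fun w hw => (hf _ (hΨ hw)).comp w (differentiableAt_pi.2 fun i =>
      (differentiableAt_halfPlaneMap hw).add_const _))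
    (fun w hw => hbdd _ (hΨ hw) (hΨδ hw)) (fun ν hν => ?_) (le_refl (0 : ℂ).re)
  obtain ⟨c', C', hC', hO⟩ := hflat ν hν
  have hre (i : Fin m) : Tendsto (fun x : ℝ => (Ψ x i).re) atTop atBot := by
    refine tendsto_atBot_mono' _ ?_ (tendsto_atBot_add_const_left _ (A + (C + 1) ^ 2)
      tendsto_neg_atTop_atBot)
    filter_upwards [eventually_ge_atTop 0] with x hx
    have := re_halfPlaneMap_add_le (A := A) hC (w := x) (by simpa) (hb i)
    simp only [Complex.ofReal_re, Complex.add_re] at this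
    dsimp [Ψ]
    linarith
  have him : ∀ᶠ x : ℝ in atTop, ∀ i, |(Ψ x i).im| ≤ 1 := by
    filter_upwards [eventually_ge_atTop 0] with x hx i
    simpa [Ψ, im_halfPlaneMap_ofReal hx] using (Complex.abs_im_le_norm _).trans (hb i)
  refine (hO.comp_tendsto (tendsto_atENormZero hC' hre him)).trans (IsBigO.of_bound (K ^ ν) ?_)
  filter_upwards [eventually_ge_atTop 0] with x hx
  rw [Function.comp_apply, Real.norm_of_nonneg (Real.rpow_nonneg (eNorm_nonneg _) ν),
    Real.norm_of_nonneg (Real.exp_nonneg _), neg_mul_eq_mul_neg, mul_comm ν, Real.exp_mul,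
    ← Real.mul_rpow (by positivity) (Real.exp_nonneg _)]
  exact Real.rpow_le_rpow (eNorm_nonneg _) (by simpa using hΨE (w := x) (by simpa)) hν.le

theorem HasAsymExp.eqOn_zero {m : ℕ} {c C : ℝ} {f : (Fin m → ℂ) → ℂ}
    (hf : DifferentiableOn ℂ f (QDom c C m)) (h0 : HasAsymExp c C f 0) : EqOn f 0 (QDom c C m) := by
  obtain ⟨-, hexp⟩ := hasAsymExp_iff.1 h0
  have hflat (ν : ℝ) (hν : 0 < ν) :
      ∃ c' C', 0 ≤ C' ∧ f =O[atENormZero c' C' m] fun z => eNorm z ^ ν := by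
    obtain ⟨c', C', -, hC', -, F, -, hO⟩ := hexp ν hν
    exact ⟨c', C', hC'.le, by simpa using hO.isBigO⟩
  obtain ⟨c₁, C₁, -, hC₁, hsub, F, -, hO⟩ := hexp 1 one_pos
  obtain ⟨δ, hδ, hbdd⟩ := isLittleO_atENormZero_iff.1 hO 1 one_pos
  set A := min (Real.log c₁) (Real.log (δ / (√m + 1))) - (C₁ + 1) ^ 2 - 1
  have hA : A + (C₁ + 1) ^ 2 < Real.log c₁ := by
    linarith [min_le_left (Real.log c₁) (Real.log (δ / (√m + 1)))]
  have hAδ : √m * Real.exp (A + (C₁ + 1) ^ 2) < δ := by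
    have : Real.exp (A + (C₁ + 1) ^ 2) < δ / (√m + 1) := by
      rw [← Real.exp_log (by positivity : 0 < δ / (√m + 1)), Real.exp_lt_exp]
      linarith [min_le_right (Real.log c₁) (Real.log (δ / (√m + 1)))]
    rw [lt_div_iff₀ (by positivity)] at this
    nlinarith [Real.exp_pos (A + (C₁ + 1) ^ 2)]
  set p := halfPlaneMap C₁ A 0
  have hnear : f =ᶠ[𝓝 fun _ => p] 0 := by
    filter_upwards [Metric.ball_mem_nhds _ one_pos] with z hz
    have := apply_halfPlaneMap_add_eq_zero hC₁.le hA hAδ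
      (fun z hz => hf.differentiableAt ((isOpen_QDom c C m).mem_nhds fun i => hsub (hz i)))
      (fun z hz hzδ => by simpa using (hbdd z hz hzδ).trans (by simpa using hzδ.le)) hflat
      (b := z - fun _ => p) fun i => by
        simpa [← dist_eq_norm] using ((dist_pi_lt_iff one_pos).1 hz i).le
    simpa [p] using this
  rw [QDom_eq_pi] at hf ⊢
  exact eqOn_zero_pi_of_eventuallyEq_zero (fun _ => isOpen_SQD c C)
    (fun _ => isPreconnected_SQD c C) hf
    (fun _ _ => by simpa using hsub (halfPlaneMap_add_mem_SQD hC₁.le hA le_rfl (b := 0) (by simp)))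
    hnear

theorem le_of_isBigO_sum_mul_cexp {ι : Type*} {s : Finset ι} {b : ι → ℂ} {L : ι → ℝ} {ν : ℝ}
    (hL : InjOn L s)
    (h : (fun t : ℝ => ∑ i ∈ s, b i * Complex.exp (L i * t)) =O[atBot] fun t => Real.exp (ν * t))
    {i : ι} (hi : i ∈ s) (hb : b i ≠ 0) : ν ≤ L i := by
  by_contra! hlt
  obtain ⟨i₀, hi₀, hmin⟩ := (s.filter (b · ≠ 0)).exists_min_image L ⟨i, by simp [hi, hb]⟩
  rw [Finset.mem_filter] at hi₀
  set μ := L i₀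
  have hμν : μ < ν := (hmin i (by simp [hi, hb])).trans_lt hlt
  -- after dividing by `exp (μ t)` only the leading term survives as `t → -∞`
  set Φ : ℝ → ℂ := fun t => ∑ j ∈ s, b j * Complex.exp ((L j - μ) * t)
  have hΦ : Tendsto Φ atBot (𝓝 (b i₀)) := by
    have : Tendsto Φ atBot (𝓝 (∑ j ∈ s, if j = i₀ then b i₀ else 0)) := by
      refine tendsto_finsetSum _ fun j hj => ?_
      by_cases hj₀ : j = i₀
      · simp [hj₀, μ]
      rw [if_neg hj₀]
      by_cases hbj : b j = 0
      · simp [hbj]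
      have hμj : μ < L j :=
        (hmin j (by simp [hj, hbj])).lt_of_ne fun h => hj₀ (hL hj hi₀.1 h.symm)
      have hlin : Tendsto (fun t : ℝ => (L j - μ) * t) atBot atBot :=
        Tendsto.const_mul_atBot (sub_pos.2 hμj) tendsto_id
      have hexp : Tendsto (fun t : ℝ => Complex.exp ((L j - μ) * t)) atBot (𝓝 0) :=
        Complex.tendsto_exp_nhds_zero_iff.2 (by simpa using hlin)
      simpa using hexp.const_mul (b j)
    rwa [Finset.sum_ite_eq', if_pos hi₀.1] at this
  have hΦ0 : Tendsto Φ atBot (𝓝 0) := by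
    obtain ⟨K, hK⟩ := h.bound
    have hlim : Tendsto (fun t => K * Real.exp ((ν - μ) * t)) atBot (𝓝 0) := by
      simpa using (Real.tendsto_exp_atBot.comp
        (Tendsto.const_mul_atBot (sub_pos.2 hμν) tendsto_id)).const_mul K
    refine squeeze_zero_norm' (hK.mono fun t ht => ?_) hlim
    have hΦt : Φ t = Complex.exp (-μ * t) * ∑ j ∈ s, b j * Complex.exp (L j * t) := by
      simp only [Φ, Finset.mul_sum]
      refine Finset.sum_congr rfl fun j _ => ?_
      rw [mul_left_comm, ← Complex.exp_add]
      ring_nf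
    calc ‖Φ t‖ = Real.exp (-μ * t) * ‖∑ j ∈ s, b j * Complex.exp (L j * t)‖ := by
          rw [hΦt, norm_mul, ← Complex.ofReal_neg, ← Complex.ofReal_mul, Complex.norm_exp_ofReal]
      _ ≤ Real.exp (-μ * t) * (K * ‖Real.exp (ν * t)‖) := by gcongr
      _ = K * Real.exp ((ν - μ) * t) := by
          rw [Real.norm_of_nonneg (Real.exp_nonneg _), mul_left_comm, ← Real.exp_add]
          ring_nf
  exact hi₀.2 (tendsto_nhds_unique hΦ hΦ0)

theorem exists_mem_injOn_sum_mul {ι : Type*} [Fintype ι] {U : Set (ι → ℝ)} (hU : IsOpen U)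
    (hne : U.Nonempty) (S : Finset (ι → ℝ)) :
    ∃ θ ∈ U, InjOn (fun α : ι → ℝ => ∑ i, α i * θ i) S := by
  classical
  set N := ⋃ β ∈ S, ⋃ γ ∈ S, ⋃ (_ : β ≠ γ), {θ : ι → ℝ | ∑ i, (β i - γ i) * θ i = 0}
  have hN : MeasureTheory.volume N = 0 := by
    refine (MeasureTheory.measure_biUnion_null_iff S.countable_toSet).2 fun β _ =>
      (MeasureTheory.measure_biUnion_null_iff S.countable_toSet).2 fun γ _ =>
        MeasureTheory.measure_iUnion_null fun hβγ => ?_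
    have : {θ : ι → ℝ | ∑ i, (β i - γ i) * θ i = 0} =
        LinearMap.ker (dotProductEquiv ℝ ι (β - γ)) := by
      ext θ; simp [dotProduct, sub_mul]
    rw [this]
    refine MeasureTheory.Measure.addHaar_submodule _ _ fun htop => hβγ (sub_eq_zero.1 ?_)
    exact (dotProductEquiv ℝ ι).injective ((LinearMap.ker_eq_top.1 htop).trans (map_zero _).symm)
  obtain ⟨θ, hθU, hθN⟩ : (U \ N).Nonempty := MeasureTheory.nonempty_of_measure_ne_zero <| by
    rw [MeasureTheory.measure_sdiff_null hN]; exact (hU.measure_pos _ hne).ne'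
  refine ⟨θ, hθU, fun β hβ γ hγ hβγ => by_contra fun hne => hθN ?_⟩
  simp only [N, mem_iUnion, mem_ofPred_eq]
  exact ⟨β, hβ, γ, hγ, hne, by simpa [sub_mul, sub_eq_zero] using hβγ⟩

theorem expMono_ofReal_mul {m : ℕ} (α θ : Fin m → ℝ) (t : ℝ) :
    expMono α (fun i => (θ i : ℂ) * t) = Complex.exp ((∑ i, α i * θ i : ℝ) * t) := by
  simp only [expMono, Complex.ofReal_sum, Complex.ofReal_mul, Finset.sum_mul, mul_assoc]

theorem eq_zero_of_isBigO_sum_mul_expMono {m : ℕ} {c C ν : ℝ} (hC : 0 ≤ C)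
    {S : Finset (Fin m → ℝ)} {b : (Fin m → ℝ) → ℂ}
    (h : (fun z => ∑ α ∈ S, b α * expMono α z) =O[atENormZero c C m] fun z => eNorm z ^ ν)
    {α₀ : Fin m → ℝ} (hα₀S : α₀ ∈ S) (hα₀ : ∀ i, 0 ≤ α₀ i) (hlt : ∑ i, α₀ i < ν) : b α₀ = 0 := by
  by_contra hb
  -- `r > 1` is chosen so that `(∑ i, α₀ i) * r < ν`
  set r := (ν + 1) / (∑ i, α₀ i + 1)
  have hsum0 : 0 ≤ ∑ i, α₀ i := Finset.sum_nonneg fun i _ => hα₀ i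
  have hr : 1 < r := by rw [one_lt_div (by positivity)]; linarith
  obtain ⟨θ, hθ, hinj⟩ := exists_mem_injOn_sum_mul (U := univ.pi fun _ => Ioo 1 r)
    (isOpen_set_pi finite_univ fun _ _ => isOpen_Ioo) ⟨fun _ => (1 + r) / 2, fun _ _ =>
      ⟨by linarith, by linarith⟩⟩ S
  have hθ1 (i : Fin m) : 1 < θ i := (hθ i trivial).1
  set γ : ℝ → Fin m → ℂ := fun t i => (θ i : ℂ) * t
  have hγ : Tendsto γ atBot (atENormZero c C m) := by
    refine tendsto_atENormZero (M := 0) hC (fun i => ?_) (.of_forall fun t i => by simp [γ])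
    simpa [γ] using Tendsto.const_mul_atBot (by linarith [hθ1 i]) tendsto_id
  have hγE : (fun t => eNorm (γ t) ^ ν) =O[atBot] fun t => Real.exp (ν * t) := by
    refine IsBigO.of_bound ((√m) ^ ν) ?_
    filter_upwards [eventually_le_atBot 0] with t ht
    have hE : eNorm (γ t) ≤ √m * Real.exp t :=
      eNorm_le_sqrt_mul_exp fun i => by
        simp only [γ, Complex.re_ofReal_mul, Complex.ofReal_re]
        nlinarith [hθ1 i]
    rw [Real.norm_of_nonneg (Real.rpow_nonneg (eNorm_nonneg _) ν),
      Real.norm_of_nonneg (Real.exp_nonneg _), mul_comm ν, Real.exp_mul,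
      ← Real.mul_rpow (by positivity) (Real.exp_nonneg _)]
    exact Real.rpow_le_rpow (eNorm_nonneg _) hE (by linarith)
  have hν := le_of_isBigO_sum_mul_cexp hinj
    (((h.comp_tendsto hγ).trans hγE).congr_left fun t => by simp [γ, expMono_ofReal_mul]) hα₀S hb
  have : ∑ i, α₀ i * θ i ≤ (∑ i, α₀ i) * r := by
    rw [Finset.sum_mul]
    exact Finset.sum_le_sum fun i _ => mul_le_mul_of_nonneg_left (hθ i trivial).2.le (hα₀ i)
  have : (∑ i, α₀ i) * r < ν := by
    rw [mul_div_assoc', div_lt_iff₀ (by positivity)]; nlinarith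
  linarith

theorem sum_superset_eq_of_mem_iff {m : ℕ} {a : (Fin m → ℝ) → ℂ} {ν : ℝ} {F T : Finset (Fin m → ℝ)}
    (hF : ∀ α, α ∈ F ↔ a α ≠ 0 ∧ ∑ i, α i ≤ ν) (hFT : F ⊆ T) (hT : ∀ α ∈ T, ∑ i, α i ≤ ν)
    (e : (Fin m → ℝ) → ℂ) : ∑ α ∈ T, a α * e α = ∑ α ∈ F, a α * e α :=
  (Finset.sum_subset hFT fun α hαT hαF => by
    rw [not_ne_iff.1 fun ha => hαF ((hF α).2 ⟨ha, hT α hαT⟩), zero_mul]).symm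

theorem HasAsymExp.unique {m : ℕ} {c C : ℝ} {g : (Fin m → ℂ) → ℂ} {a a' : (Fin m → ℝ) → ℂ}
    (h : HasAsymExp c C g a) (h' : HasAsymExp c C g a') : a = a' := by
  funext α₀
  by_contra hne
  have hα₀ : a α₀ ≠ 0 ∨ a' α₀ ≠ 0 := by
    by_contra! h0; exact hne (h0.1.trans h0.2.symm)
  have hα₀nn : ∀ i, 0 ≤ α₀ i := hα₀.elim (h.1.1 α₀) (h'.1.1 α₀)
  set ν := ∑ i, α₀ i + 1
  have hν : 0 < ν := by linarith [Finset.sum_nonneg fun i (_ : i ∈ Finset.univ) => hα₀nn i]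
  obtain ⟨c₁, C₁, hc₁, hC₁, -, F, hF, hO⟩ := (hasAsymExp_iff.1 h).2 ν hν
  obtain ⟨c₂, C₂, hc₂, -, -, F', hF', hO'⟩ := (hasAsymExp_iff.1 h').2 ν hν
  have hsub := SQD_min_max_subset (C₁ := C₁) (C₂ := C₂) hc₁ hc₂
  have hT : ∀ α ∈ F ∪ F', ∑ i, α i ≤ ν := fun α hα =>
    (Finset.mem_union.1 hα).elim (fun h => ((hF α).1 h).2) (fun h => ((hF' α).1 h).2)
  have hdiff := ((hO'.mono (atENormZero_mono (hsub.trans inter_subset_right))).sub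
    (hO.mono (atENormZero_mono (hsub.trans inter_subset_left)))).isBigO
  have hsum (z : Fin m → ℂ) :
      g z - ∑ α ∈ F', a' α * expMono α z - (g z - ∑ α ∈ F, a α * expMono α z) =
        ∑ α ∈ F ∪ F', (a α - a' α) * expMono α z := by
    simp only [sub_mul, Finset.sum_sub_distrib,
      sum_superset_eq_of_mem_iff hF Finset.subset_union_left hT,
      sum_superset_eq_of_mem_iff hF' Finset.subset_union_right hT]
    ring
  have hα₀S : α₀ ∈ F ∪ F' :=
    hα₀.elim (fun h => Finset.mem_union_left _ ((hF α₀).2 ⟨h, by linarith⟩))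
      (fun h => Finset.mem_union_right _ ((hF' α₀).2 ⟨h, by linarith⟩))
  exact hne (sub_eq_zero.1 (eq_zero_of_isBigO_sum_mul_expMono (hC₁.le.trans (le_max_left _ _))
    (hdiff.congr_left hsum) hα₀S hα₀nn (by linarith)))

theorem HasAsymExp.sub {m : ℕ} {c C : ℝ} {g₁ g₂ : (Fin m → ℂ) → ℂ} {a : (Fin m → ℝ) → ℂ}
    (h₁ : HasAsymExp c C g₁ a) (h₂ : HasAsymExp c C g₂ a) : HasAsymExp c C (g₁ - g₂) 0 := by
  refine hasAsymExp_iff.2 ⟨⟨by simp, by simp⟩, fun ν hν => ?_⟩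
  obtain ⟨c₁, C₁, hc₁, hC₁, hsub₁, F, hF, hO⟩ := (hasAsymExp_iff.1 h₁).2 ν hν
  obtain ⟨c₂, C₂, hc₂, -, -, F', hF', hO'⟩ := (hasAsymExp_iff.1 h₂).2 ν hν
  obtain rfl : F = F' := Finset.ext fun α => (hF α).trans (hF' α).symm
  have hsub := SQD_min_max_subset (C₁ := C₁) (C₂ := C₂) hc₁ hc₂
  refine ⟨min c₁ c₂, max C₁ C₂, lt_min hc₁ hc₂, hC₁.trans_le (le_max_left _ _),
    hsub.trans (inter_subset_left.trans hsub₁), ∅, by simp, ?_⟩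
  simpa using (hO.mono (atENormZero_mono (hsub.trans inter_subset_left))).sub
    (hO'.mono (atENormZero_mono (hsub.trans inter_subset_right)))

theorem stmt2_general (m : ℕ) (c C : ℝ)
    (f : (Fin m → ℂ) → ℂ) (hf : DifferentiableOn ℂ f (QDom c C m))
    (h0 : HasAsymExp c C f (fun _ => 0)) :
    (∀ z ∈ QDom c C m, f z = 0) ∧
    (∀ g : (Fin m → ℂ) → ℂ, DifferentiableOn ℂ g (QDom c C m) →
      ∀ a a' : (Fin m → ℝ) → ℂ, HasAsymExp c C g a → HasAsymExp c C g a' → a = a') ∧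
    (∀ g₁ g₂ : (Fin m → ℂ) → ℂ, DifferentiableOn ℂ g₁ (QDom c C m) →
      DifferentiableOn ℂ g₂ (QDom c C m) →
      ∀ a : (Fin m → ℝ) → ℂ, HasAsymExp c C g₁ a → HasAsymExp c C g₂ a →
        ∀ z ∈ QDom c C m, g₁ z = g₂ z) :=
  ⟨HasAsymExp.eqOn_zero hf h0, fun _ _ _ _ => HasAsymExp.unique,
    fun _ _ hg₁ hg₂ _ h₁ h₂ _ hz => sub_eq_zero.1 ((h₁.sub h₂).eqOn_zero (hg₁.sub hg₂) hz)⟩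

/-- Quasianalyticity: a holomorphic function on `Ω(c,C)^m` with asymptotic
expansion `0` vanishes identically; hence asymptotic expansions (with natural support) are
unique, and two holomorphic functions with the same asymptotic expansion coincide. -/
theorem stmt2 (m : ℕ) (hm : 1 ≤ m) (c C : ℝ) (hc : 0 < c) (hC : 0 < C)
    (f : (Fin m → ℂ) → ℂ) (hf : DifferentiableOn ℂ f (QDom c C m))
    (h0 : HasAsymExp c C f (fun _ => 0)) :
    (∀ z ∈ QDom c C m, f z = 0) ∧
    (∀ g : (Fin m → ℂ) → ℂ, DifferentiableOn ℂ g (QDom c C m) →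
      ∀ a a' : (Fin m → ℝ) → ℂ, HasAsymExp c C g a → HasAsymExp c C g a' → a = a') ∧
    (∀ g₁ g₂ : (Fin m → ℂ) → ℂ, DifferentiableOn ℂ g₁ (QDom c C m) →
      DifferentiableOn ℂ g₂ (QDom c C m) →
      ∀ a : (Fin m → ℝ) → ℂ, HasAsymExp c C g₁ a → HasAsymExp c C g₂ a →
        ∀ z ∈ QDom c C m, g₁ z = g₂ z) :=
  stmt2_general m c C f hf h0
end
end
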